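/- Let q be a prime power with char(F_q) ∉ {2,3}, let e = ±1 with q ≡ e (mod 3), and let D ∈ F_{q³} \ F_q satisfy N(D) = 1 and N(D+1) = −1, where N is the norm from F_{q³} to F_q. Let a be a primitive third root of unity in the algebraic closure, C(D) = (D − a⁻¹)/(D − a), and G = {x : x^{3(q−e)} = 1}. Then C(D) is a square in the group G if and only if D² + D + 1 is a square in F_{q³}. -/

import Mathlib

/-!
Write `x = D² + D + 1 = (D - a)(D - a²)` and `C = (D - a²) / (D - a)`, and let `A`, `B` be the
products of the conjugates `D^{qⁱ} - a`, resp. `D^{qⁱ} - a²` (`i < 3`), so that `AB = N(x)`.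
The conditions `N(D) = 1`, `N(D + 1) = -1` amount to the identity `C(D)² = C(D^q) C(D^{q²})`,
i.e. `C³ = B / A`. Since `a^q = a^e`, Frobenius fixes `B` when `e = 1` and maps it to `A` when
`e = -1`; either way `C^{3(q-e)/2} · x^{(q³-1)/2} = 1`. Hence `C` is a square in `G` iff
`C^{3(q-e)/2} = 1` iff `x^{(q³-1)/2} = 1`, which is Euler's criterion for `x` in `𝔽_{q³}`
(`x ≠ 0` because the roots of `Y² + Y + 1` in `𝔽_{q³}` lie in `𝔽_q`).
-/

open Polynomial in
theorem mem_range_algebraMap_of_pow_card_eq_self {K L : Type*} [Field K] [Fintype K] [Field L]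
    [Algebra K L] {x : L} (hx : x ^ Fintype.card K = x) : x ∈ Set.range (algebraMap K L) := by
  classical
  set P : L[X] := X ^ Fintype.card K - X
  have hP : P ≠ 0 := FiniteField.X_pow_card_sub_X_ne_zero L Fintype.one_lt_card
  have hroot : ∀ y : L, y ^ Fintype.card K = y → y ∈ P.roots.toFinset := fun y hy => by
    simp [P, hP, hy]
  have himage : Finset.univ.image (algebraMap K L) = P.roots.toFinset := by
    apply Finset.eq_of_subset_of_card_le
    · intro y hy
      obtain ⟨z, -, rfl⟩ := Finset.mem_image.1 hy
      exact hroot _ (by rw [← map_pow, FiniteField.pow_card])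
    · calc P.roots.toFinset.card ≤ Multiset.card P.roots := Multiset.toFinset_card_le _
        _ ≤ P.natDegree := card_roots' P
        _ = Fintype.card K := FiniteField.X_pow_card_sub_X_natDegree_eq L Fintype.one_lt_card
        _ = (Finset.univ.image (algebraMap K L)).card := by
          rw [Finset.card_image_of_injective _ (algebraMap K L).injective, Finset.card_univ]
  obtain ⟨z, -, hz⟩ := Finset.mem_image.1 (himage ▸ hroot x hx)
  exact ⟨z, hz⟩

theorem zpow_eq_zpow_of_pow_eq_one {G₀ : Type*} [GroupWithZero G₀] {u : G₀} {n : ℕ} (hn : n ≠ 0)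
    (hu : u ^ n = 1) {i j : ℤ} (hij : (i : ZMod n) = j) : u ^ i = u ^ j := by
  obtain ⟨c, hc⟩ := (ZMod.intCast_eq_intCast_iff_dvd_sub j i n).1 hij.symm
  have hu0 : u ≠ 0 := by rintro rfl; simp [zero_pow hn] at hu
  rw [show i = j + n * c by omega, zpow_add₀ hu0, zpow_mul, zpow_natCast, hu, one_zpow, mul_one]

theorem exists_sq_eq_and_pow_eq_one_iff {M : Type*} [Monoid M] {c : M} (hc : IsSquare c) (m : ℕ) :
    (∃ g : M, g ^ (2 * m) = 1 ∧ g ^ 2 = c) ↔ c ^ m = 1 := by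
  constructor
  · rintro ⟨g, hg, rfl⟩
    rwa [← pow_mul]
  · obtain ⟨r, rfl⟩ := hc
    exact fun h => ⟨r, by rwa [pow_mul, sq], sq r⟩

-- With `C y = (y - a²) / (y - a)` this says `C d₀ ^ 2 = C d₁ * C d₂`.
theorem sub_sq_mul_eq_of_norm_conditions {R : Type*} [CommRing R] {a d₀ d₁ d₂ : R}
    (ha : a ^ 2 + a + 1 = 0) (h₁ : d₀ * d₁ * d₂ = 1)
    (h₂ : (d₀ + 1) * (d₁ + 1) * (d₂ + 1) = -1) :
    (d₀ - a ^ 2) ^ 2 * ((d₁ - a) * (d₂ - a)) = (d₀ - a) ^ 2 * ((d₁ - a ^ 2) * (d₂ - a ^ 2)) := by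
  linear_combination (a - a ^ 2) * ((d₀ + 2) * h₁ + (1 - d₀) * h₂) +
    a * (2 * a ^ 2 * d₀ - a ^ 2 * d₁ - a ^ 2 * d₂ - a * d₀ ^ 2 - 4 * a * d₀ + a * d₁ * d₂
      + 2 * a * d₁ + 2 * a * d₂ + d₀ ^ 2 + 2 * d₀ - d₁ * d₂ - d₁ - d₂) * ha

section Frobenius

variable {F : Type*} [Field F] {p k q : ℕ} [ExpChar F p]

theorem add_pow_pow_of_eq_pow (hq : q = p ^ k) (x y : F) (n : ℕ) :
    (x + y) ^ q ^ n = x ^ q ^ n + y ^ q ^ n := by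
  rw [hq, ← pow_mul, add_pow_expChar_pow]

/-- For `c ∈ 𝔽_q` and `d ∈ 𝔽_{q³}` this is the norm of `d - c`; `c` itself is not conjugated. -/
def conjSubProd (q : ℕ) (d c : F) : F := (d - c) * (d ^ q - c) * (d ^ q ^ 2 - c)

theorem conjSubProd_pow (hq : q = p ^ k) {d : F} (hd : d ^ q ^ 3 = d) (c : F) :
    conjSubProd q d c ^ q = conjSubProd q d (c ^ q) := by
  have hsub : ∀ x y : F, (x - y) ^ q = x ^ q - y ^ q := fun x y => by
    rw [hq, sub_pow_expChar_pow]
  simp only [conjSubProd, mul_pow, hsub, ← pow_mul, ← pow_succ, hd]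
  ring

theorem conjSubProd_mul_conjSubProd_sq (hq : q = p ^ k) {a : F} (ha : a ^ 2 + a + 1 = 0) (d : F) :
    conjSubProd q d a * conjSubProd q d (a ^ 2) = (d ^ 2 + d + 1) ^ (q ^ 2 + q + 1) := by
  have hfac : ∀ y : F, (y - a) * (y - a ^ 2) = y ^ 2 + y + 1 := fun y => by
    linear_combination (a - y - 1) * ha
  have hfrob : ∀ n : ℕ, (d ^ 2 + d + 1) ^ q ^ n = (d ^ q ^ n) ^ 2 + d ^ q ^ n + 1 := fun n => by
    rw [add_pow_pow_of_eq_pow hq, add_pow_pow_of_eq_pow hq, one_pow, pow_right_comm]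
  have hfrob₁ := hfrob 1
  rw [pow_one] at hfrob₁
  rw [pow_add, pow_add, pow_one, hfrob 2, hfrob₁, ← hfac, ← hfac, ← hfac, conjSubProd,
    conjSubProd]
  ring

theorem sub_pow_three_mul_conjSubProd (hq : q = p ^ k) {a d : F} (ha : a ^ 2 + a + 1 = 0)
    (h₁ : d ^ (q ^ 2 + q + 1) = 1) (h₂ : (d + 1) ^ (q ^ 2 + q + 1) = -1) :
    (d - a ^ 2) ^ 3 * conjSubProd q d a = (d - a) ^ 3 * conjSubProd q d (a ^ 2) := by
  have hfrob : ∀ n : ℕ, (d + 1) ^ q ^ n = d ^ q ^ n + 1 := fun n => by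
    rw [add_pow_pow_of_eq_pow hq, one_pow]
  have hfrob₁ := hfrob 1
  rw [pow_one] at hfrob₁
  have key := sub_sq_mul_eq_of_norm_conditions (d₁ := d ^ q) (d₂ := d ^ q ^ 2) ha
    (by rw [← h₁]; ring) (by rw [← h₂, ← hfrob₁, ← hfrob 2]; ring)
  rw [conjSubProd, conjSubProd]
  linear_combination (d - a) * (d - a ^ 2) * key

end Frobenius

theorem cayley_pow_mul_pow_half_eq_one {F : Type*} [Field F] {p k q r m : ℕ} [ExpChar F p]
    (hq : q = p ^ k) (hr : q = 2 * r + 1) {e : ℤ} (he : e = 1 ∨ e = -1)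
    (hm : (2 * m : ℤ) = 3 * (q - e)) {a d : F} (ha : a ^ 2 + a + 1 = 0) (haq : a ^ q = a ^ e)
    (hd : d ^ q ^ 3 = d) (h₁ : d ^ (q ^ 2 + q + 1) = 1) (h₂ : (d + 1) ^ (q ^ 2 + q + 1) = -1)
    (hx : d ^ 2 + d + 1 ≠ 0) :
    ((d - a⁻¹) / (d - a)) ^ m * (d ^ 2 + d + 1) ^ (q ^ 3 / 2) = 1 := by
  have ha_inv : a⁻¹ = a ^ 2 := inv_eq_of_mul_eq_one_right (by linear_combination (a - 1) * ha)
  set A := conjSubProd q d a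
  set B := conjSubProd q d (a ^ 2)
  have hAB : A * B = (d ^ 2 + d + 1) ^ (q ^ 2 + q + 1) :=
    conjSubProd_mul_conjSubProd_sq hq ha d
  have hA : A ≠ 0 := left_ne_zero_of_mul (hAB ▸ pow_ne_zero _ hx)
  have hB : B ≠ 0 := right_ne_zero_of_mul (hAB ▸ pow_ne_zero _ hx)
  have hda : d - a ≠ 0 := by
    intro h
    exact hx (by linear_combination (d + a + 1) * h + ha)
  have hcube : ((d - a ^ 2) / (d - a)) ^ 3 = B / A := by
    rw [div_pow, div_eq_div_iff (pow_ne_zero 3 hda) hA]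
    exact (sub_pow_three_mul_conjSubProd hq ha h₁ h₂).trans (mul_comm _ _)
  have hexp : q ^ 3 / 2 = (q ^ 2 + q + 1) * r := by
    have : q ^ 3 = 2 * ((q ^ 2 + q + 1) * r) + 1 := by subst hr; ring
    omega
  have hBq : B ^ q = conjSubProd q d ((a ^ q) ^ 2) := by
    rw [conjSubProd_pow hq hd, pow_right_comm]
  rw [ha_inv, hexp, pow_mul, ← hAB]
  rcases he with rfl | rfl
  · have hBr : B ^ (2 * r) = 1 := by
      refine mul_right_cancel₀ hB ?_
      rw [← pow_succ, ← hr, hBq, haq, zpow_one, one_mul]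
    rw [show m = 3 * r by omega, pow_mul, hcube, div_pow, mul_pow, div_mul_eq_mul_div,
      div_eq_one_iff_eq (pow_ne_zero r hA)]
    linear_combination A ^ r * hBr
  · have hBr : B ^ (2 * r + 1) = A := by
      rw [← hr, hBq, haq, zpow_neg_one, ha_inv]
      congr 1
      linear_combination (a ^ 2 - a) * ha
    rw [show m = 3 * (r + 1) by omega, pow_mul, hcube, div_pow, mul_pow, div_mul_eq_mul_div,
      div_eq_one_iff_eq (pow_ne_zero _ hA)]
    linear_combination A ^ r * hBr

theorem sq_add_add_one_ne_zero_of_notMem_range {K L : Type*} [Field K] [Fintype K] [Field L]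
    [Fintype L] [Algebra K L] (hL : Fintype.card L = Fintype.card K ^ 3) {e : ℤ}
    (he : e = 1 ∨ e = -1) (hKe : ((Fintype.card K : ℤ) : ZMod 3) = e) {D : L}
    (hD : D ∉ Set.range (algebraMap K L)) : D ^ 2 + D + 1 ≠ 0 := by
  intro hx
  have hD3 : D ^ 3 = 1 := by linear_combination (D - 1) * hx
  have hDq : D ^ Fintype.card K = D ^ e := by
    rw [← zpow_natCast, zpow_eq_zpow_of_pow_eq_one three_ne_zero hD3 hKe]
  apply hD
  rcases he with rfl | rfl
  · exact mem_range_algebraMap_of_pow_card_eq_self (by rwa [zpow_one] at hDq)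
  · have hD0 : D ≠ 0 := by rintro rfl; norm_num at hD3
    rw [zpow_neg_one] at hDq
    have hq2 : D ^ Fintype.card K ^ 2 = D := by rw [sq, pow_mul, hDq, inv_pow, hDq, inv_inv]
    have hDinv : D⁻¹ = D := by
      calc D⁻¹ = (D ^ Fintype.card K ^ 2) ^ Fintype.card K := by rw [hq2, hDq]
        _ = D := by rw [← pow_mul, ← pow_succ, ← hL, FiniteField.pow_card]
    have hD1 : D = 1 := by
      have hsq : D * D = 1 := by nth_rewrite 2 [← hDinv]; exact mul_inv_cancel₀ hD0
      linear_combination hD3 - D * hsq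
    exact ⟨1, by rw [map_one, hD1]⟩

theorem stmt_19_general (p k q : ℕ) (hp : Nat.Prime p) (hq : q = p ^ k)
    (hp2 : p ≠ 2)
    (e : ℤ) (he : e = 1 ∨ e = -1) (hqe : ((q : ℤ) : ZMod 3) = ((e : ℤ) : ZMod 3))
    (K L : Type) [Field K] [Fintype K] [Field L] [Fintype L] [Algebra K L]
    (hK : Fintype.card K = q) (hL : Fintype.card L = q ^ 3)
    (Ω : Type) [Field Ω] [IsAlgClosed Ω] [Algebra L Ω]
    (a : Ω) (ha3 : a ^ 3 = 1) (ha1 : a ≠ 1)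
    (D : L) (hD : D ∉ Set.range (algebraMap K L))
    (h1 : D ^ (q ^ 2 + q + 1) = 1) (h2 : (D + 1) ^ (q ^ 2 + q + 1) = -1) :
    (∃ g : Ω, g ^ (3 * ((q : ℤ) - e)) = 1 ∧
        g ^ 2 = (algebraMap L Ω D - a⁻¹) / (algebraMap L Ω D - a))
      ↔ IsSquare (D ^ 2 + D + 1) := by
  have := Fact.mk hp
  have : CharP L p := charP_of_card_eq_prime_pow (p := p) (f := k * 3) (by rw [hL, hq, pow_mul])
  have : CharP Ω p := charP_of_injective_algebraMap (algebraMap L Ω).injective p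
  obtain ⟨r, hr⟩ : Odd q := hq ▸ (hp.odd_of_ne_two hp2).pow
  obtain ⟨m, hm⟩ : ∃ m : ℕ, ((2 * m : ℕ) : ℤ) = 3 * (q - e) := by
    rcases he with rfl | rfl
    exacts [⟨3 * r, by push_cast; omega⟩, ⟨3 * (r + 1), by push_cast; omega⟩]
  have ha : a ^ 2 + a + 1 = 0 := by
    refine (mul_eq_zero.1 ?_).resolve_left (sub_ne_zero.2 ha1)
    linear_combination ha3
  have hx : D ^ 2 + D + 1 ≠ 0 :=
    sq_add_add_one_ne_zero_of_notMem_range (hK ▸ hL) he (hK ▸ hqe) hD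
  have key := cayley_pow_mul_pow_half_eq_one (F := Ω) (d := algebraMap L Ω D) hq hr he hm ha
    (by rw [← zpow_natCast, zpow_eq_zpow_of_pow_eq_one three_ne_zero ha3 hqe])
    (by rw [← map_pow, ← hL, FiniteField.pow_card])
    (by simpa using congrArg (algebraMap L Ω) h1) (by simpa using congrArg (algebraMap L Ω) h2)
    (by simpa using (map_ne_zero (algebraMap L Ω)).2 hx)
  simp only [← hm, zpow_natCast]
  rw [exists_sq_eq_and_pow_eq_one_iff (IsAlgClosed.exists_eq_mul_self _),
    FiniteField.isSquare_iff (by rw [ringChar.eq L p]; exact hp2) hx, hL,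
    ← (algebraMap L Ω).injective.eq_iff]
  simp only [map_pow, map_add, map_one]
  constructor <;> intro h <;> simpa [h] using key

/-- For `D ∈ S₄(1,−1) \ F_q`, the element `C(D) = (D − a⁻¹)/(D − a)` is a square in the
group `G = {x : x^{3(q−e)} = 1}` iff `D² + D + 1` is a square in `F_{q³}`. -/
theorem stmt_19 (p k q : ℕ) (hp : Nat.Prime p) (hk : 0 < k) (hq : q = p ^ k)
    (hp2 : p ≠ 2) (hp3 : p ≠ 3)
    (e : ℤ) (he : e = 1 ∨ e = -1) (hqe : ((q : ℤ) : ZMod 3) = ((e : ℤ) : ZMod 3))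
    (K L : Type) [Field K] [Fintype K] [Field L] [Fintype L] [Algebra K L]
    (hK : Fintype.card K = q) (hL : Fintype.card L = q ^ 3)
    (Ω : Type) [Field Ω] [IsAlgClosed Ω] [Algebra L Ω]
    (a : Ω) (ha3 : a ^ 3 = 1) (ha1 : a ≠ 1)
    (D : L) (hD : D ∉ Set.range (algebraMap K L))
    (h1 : D ^ (q ^ 2 + q + 1) = 1) (h2 : (D + 1) ^ (q ^ 2 + q + 1) = -1) :
    (∃ g : Ω, g ^ (3 * ((q : ℤ) - e)) = 1 ∧
        g ^ 2 = (algebraMap L Ω D - a⁻¹) / (algebraMap L Ω D - a))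
      ↔ IsSquare (D ^ 2 + D + 1) :=
  stmt_19_general p k q hp hq hp2 e he hqe K L hK hL Ω a ha3 ha1 D hD h1 h2
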